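/- arXiv:2207.07521 — 3 statements merged into one kernel-verified Lean document; each statement's English description precedes it below -/
import Mathlib

section
/- Strong law of large numbers for renewal-reward processes: if E[S_1] < +∞ and E[‖X_1‖] < +∞, then W_t/t converges almost surely, as t → +∞, to μ := E[X_1]/E[S_1]. -/
open MeasureTheory ProbabilityTheory Filter Finset Topology

/-!
Pathwise, the strong law of large numbers gives `T n / n → E[S]` and `(X 0 + ⋯ + X (n-1)) / n → E[X]`.
Since `E[S] > 0`, `T n → ∞`, so `N t` is finite and tends to infinity, and
`T (N t) ≤ t < T (N t + 1)` squeezes `t / N t` to `E[S]`. Hence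
`W t / t = (N t / t) • (W t / N t) → E[S]⁻¹ • E[X]`.
-/

-- `sSup` of an unbounded set of naturals is `0`; the lemmas below assume `∑ i ∈ range n, s i → ∞`.
noncomputable def renewalCount (s : ℕ → ℝ) (t : ℝ) : ℕ :=
  sSup {n : ℕ | ∑ j ∈ range n, s j ≤ t}

lemma Filter.Tendsto.inv_mul_comp_succ {a : ℕ → ℝ} {μ : ℝ}
    (h : Tendsto (fun n : ℕ => (n : ℝ)⁻¹ * a n) atTop (𝓝 μ)) :
    Tendsto (fun n : ℕ => (n : ℝ)⁻¹ * a (n + 1)) atTop (𝓝 μ) := by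
  have hshift : Tendsto (fun n : ℕ => ((n : ℝ) + 1)⁻¹ * a (n + 1)) atTop (𝓝 μ) := by
    simpa only [Function.comp_def, Nat.cast_succ] using h.comp (tendsto_add_atTop_nat 1)
  refine (div_one μ ▸ hshift.div (tendsto_natCast_div_add_atTop (1 : ℝ)) one_ne_zero).congr' ?_
  filter_upwards [eventually_ne_atTop 0] with n hn
  have : (n : ℝ) ≠ 0 := Nat.cast_ne_zero.2 hn
  simp only [Pi.div_apply]
  field_simp

section RenewalCount

variable {s : ℕ → ℝ} {μ : ℝ}

lemma tendsto_sum_range_atTop_of_cesaro_pos (hμ : 0 < μ)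
    (hs : Tendsto (fun n : ℕ => (n : ℝ)⁻¹ * ∑ i ∈ range n, s i) atTop (𝓝 μ)) :
    Tendsto (fun n => ∑ i ∈ range n, s i) atTop atTop := by
  refine (tendsto_natCast_atTop_atTop.atTop_mul_pos hμ hs).congr' ?_
  filter_upwards [eventually_ne_atTop 0] with n hn
  rw [mul_inv_cancel_left₀ (Nat.cast_ne_zero.2 hn)]

lemma bddAbove_setOf_sum_range_le (hs : Tendsto (fun n => ∑ i ∈ range n, s i) atTop atTop)
    (t : ℝ) : BddAbove {n : ℕ | ∑ j ∈ range n, s j ≤ t} := by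
  obtain ⟨M, hM⟩ := (hs.eventually_gt_atTop t).exists_forall_of_atTop
  exact ⟨M, fun n hn => not_lt.1 fun hMn => (hM n hMn.le).not_ge hn⟩

lemma sum_range_renewalCount_le (hs : Tendsto (fun n => ∑ i ∈ range n, s i) atTop atTop)
    {t : ℝ} (ht : 0 ≤ t) : ∑ j ∈ range (renewalCount s t), s j ≤ t :=
  Nat.sSup_mem ⟨0, by simpa using ht⟩ (bddAbove_setOf_sum_range_le hs t)

lemma lt_sum_range_renewalCount_succ (hs : Tendsto (fun n => ∑ i ∈ range n, s i) atTop atTop)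
    (t : ℝ) : t < ∑ j ∈ range (renewalCount s t + 1), s j :=
  not_le.1 fun h =>
    (renewalCount s t).lt_succ_self.not_ge (le_csSup (bddAbove_setOf_sum_range_le hs t) h)

lemma tendsto_renewalCount_atTop (hs : Tendsto (fun n => ∑ i ∈ range n, s i) atTop atTop) :
    Tendsto (renewalCount s) atTop atTop :=
  tendsto_atTop.2 fun n => (eventually_ge_atTop (∑ j ∈ range n, s j)).mono fun t ht =>
    le_csSup (bddAbove_setOf_sum_range_le hs t) ht

lemma tendsto_div_renewalCount (hμ : 0 < μ)
    (hs : Tendsto (fun n : ℕ => (n : ℝ)⁻¹ * ∑ i ∈ range n, s i) atTop (𝓝 μ)) :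
    Tendsto (fun t => t / renewalCount s t) atTop (𝓝 μ) := by
  have hsum := tendsto_sum_range_atTop_of_cesaro_pos hμ hs
  have hN := tendsto_renewalCount_atTop hsum
  refine tendsto_of_tendsto_of_tendsto_of_le_of_le' (hs.comp hN) (hs.inv_mul_comp_succ.comp hN)
    ?_ (Eventually.of_forall fun t => ?_)
  · filter_upwards [eventually_ge_atTop 0] with t ht
    rw [div_eq_inv_mul]
    exact mul_le_mul_of_nonneg_left (sum_range_renewalCount_le hsum ht) (by positivity)
  · rw [Function.comp_apply, div_eq_inv_mul]
    exact mul_le_mul_of_nonneg_left (lt_sum_range_renewalCount_succ hsum t).le (by positivity)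

theorem tendsto_smul_sum_range_renewalCount {E : Type*} [AddCommMonoid E] [TopologicalSpace E]
    [Module ℝ E] [ContinuousSMul ℝ E] {x : ℕ → E} {L : E} (hμ : 0 < μ)
    (hs : Tendsto (fun n : ℕ => (n : ℝ)⁻¹ * ∑ i ∈ range n, s i) atTop (𝓝 μ))
    (hx : Tendsto (fun n : ℕ => (n : ℝ)⁻¹ • ∑ i ∈ range n, x i) atTop (𝓝 L)) :
    Tendsto (fun t => t⁻¹ • ∑ i ∈ range (renewalCount s t), x i) atTop (𝓝 (μ⁻¹ • L)) := by
  have hN := tendsto_renewalCount_atTop (tendsto_sum_range_atTop_of_cesaro_pos hμ hs)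
  refine (((tendsto_div_renewalCount hμ hs).inv₀ hμ.ne').smul (hx.comp hN)).congr' ?_
  filter_upwards [hN.eventually_ne_atTop 0] with t ht
  have : (renewalCount s t : ℝ) ≠ 0 := Nat.cast_ne_zero.2 ht
  rw [Function.comp_apply, smul_smul, inv_div, div_mul_eq_mul_div, mul_inv_cancel₀ this, one_div]

end RenewalCount

lemma integral_pos_of_nonneg_of_measure_setOf_eq_zero_lt {α : Type*} [MeasurableSpace α]
    {μ : Measure α} {f : α → ℝ} (hf : 0 ≤ f) (hfi : Integrable f μ)
    (h0 : μ {x | f x = 0} < μ Set.univ) : 0 < ∫ x, f x ∂μ := by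
  refine (integral_nonneg hf).lt_of_ne fun h => h0.ne (measure_congr (ae_eq_univ.2 ?_))
  exact ae_iff.1 ((integral_eq_zero_iff_of_nonneg hf hfi).1 h.symm)

theorem renewal_reward_slln_general
    {Ω : Type*} [MeasurableSpace Ω] (P : Measure Ω) [IsProbabilityMeasure P]
    (d : ℕ)
    (S : ℕ → Ω → ℝ) (X : ℕ → Ω → EuclideanSpace ℝ (Fin d))
    -- waiting times are nonnegative
    (hSnn : ∀ n ω, 0 ≤ S n ω)
    -- the pairs (S n, X n) are independent ...
    (hindep : iIndepFun (fun n ω => (S n ω, X n ω)) P)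
    -- ... and identically distributed
    (hident : ∀ n, IdentDistrib (fun ω => (S n ω, X n ω)) (fun ω => (S 0 ω, X 0 ω)) P P)
    -- the waiting times are not concentrated at zero
    (hS0 : P {ω | S 0 ω = 0} < 1)
    -- renewal times
    (T : ℕ → Ω → ℝ) (hT : ∀ n ω, T n ω = ∑ i ∈ Finset.range n, S i ω)
    -- number of renewals by time t
    (N : ℝ → Ω → ℕ) (hN : ∀ t ω, N t ω = sSup {n : ℕ | T n ω ≤ t})
    -- cumulative reward
    (W : ℝ → Ω → EuclideanSpace ℝ (Fin d))
    (hW : ∀ t ω, W t ω = ∑ i ∈ Finset.range (N t ω), X i ω)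
    -- moment conditions: E[S 1] < ∞ and E[‖X 1‖] < ∞
    (hSint : Integrable (S 0) P) (hXint : Integrable (X 0) P) :
    ∀ᵐ ω ∂P, Tendsto (fun t : ℝ => t⁻¹ • W t ω) atTop
      (nhds ((∫ ω, S 0 ω ∂P)⁻¹ • ∫ ω, X 0 ω ∂P)) := by
  have hSindep : Pairwise (Function.onFun (· ⟂ᵢ[P] ·) S) := fun i j hij =>
    (hindep.comp (fun _ => Prod.fst) fun _ => measurable_fst).indepFun hij
  have hXindep : Pairwise (Function.onFun (· ⟂ᵢ[P] ·) X) := fun i j hij =>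
    (hindep.comp (fun _ => Prod.snd) fun _ => measurable_snd).indepFun hij
  have hSmean : 0 < ∫ ω, S 0 ω ∂P :=
    integral_pos_of_nonneg_of_measure_setOf_eq_zero_lt (hSnn 0) hSint (by rwa [measure_univ])
  filter_upwards [strong_law_ae S hSint hSindep fun n => (hident n).comp measurable_fst,
    strong_law_ae X hXint hXindep fun n => (hident n).comp measurable_snd] with ω hSω hXω
  have hW_eq : ∀ t, W t ω = ∑ i ∈ range (renewalCount (S · ω) t), X i ω := fun t => by
    simp only [hW, hN, hT, renewalCount]
  simpa only [hW_eq] using tendsto_smul_sum_range_renewalCount hSmean hSω hXω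

/-- Strong law of large numbers for renewal-reward processes: if `E[S 1] < ∞` and
`E[‖X 1‖] < ∞`, then `W t / t → E[X 1] / E[S 1]` almost surely as `t → ∞`. -/
theorem renewal_reward_slln
    {Ω : Type*} [MeasurableSpace Ω] (P : Measure Ω) [IsProbabilityMeasure P]
    (d : ℕ) (hd : 1 ≤ d)
    (S : ℕ → Ω → ℝ) (X : ℕ → Ω → EuclideanSpace ℝ (Fin d))
    -- waiting times are nonnegative
    (hSnn : ∀ n ω, 0 ≤ S n ω)
    -- the pairs (S n, X n) are independent ...
    (hindep : iIndepFun (fun n ω => (S n ω, X n ω)) P)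
    -- ... and identically distributed
    (hident : ∀ n, IdentDistrib (fun ω => (S n ω, X n ω)) (fun ω => (S 0 ω, X 0 ω)) P P)
    -- the waiting times are not concentrated at zero
    (hS0 : P {ω | S 0 ω = 0} < 1)
    -- renewal times
    (T : ℕ → Ω → ℝ) (hT : ∀ n ω, T n ω = ∑ i ∈ Finset.range n, S i ω)
    -- number of renewals by time t
    (N : ℝ → Ω → ℕ) (hN : ∀ t ω, N t ω = sSup {n : ℕ | T n ω ≤ t})
    -- cumulative reward
    (W : ℝ → Ω → EuclideanSpace ℝ (Fin d))
    (hW : ∀ t ω, W t ω = ∑ i ∈ Finset.range (N t ω), X i ω)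
    -- moment conditions: E[S 1] < ∞ and E[‖X 1‖] < ∞
    (hSint : Integrable (S 0) P) (hXint : Integrable (X 0) P) :
    ∀ᵐ ω ∂P, Tendsto (fun t : ℝ => t⁻¹ • W t ω) atTop
      (nhds ((∫ ω, S 0 ω ∂P)⁻¹ • ∫ ω, X 0 ω ∂P)) :=
  renewal_reward_slln_general P d S X hSnn hindep hident hS0 T hT N hN W hW hSint hXint
end

section
/- The function I defined by I(w) := inf_{β∈[0,1]} {Υ(β,w) + (1−β)ℓ} when ℓ < +∞, and I(w) := Υ(1,w) when ℓ = +∞, is lower semicontinuous and convex on ℝ^d. -/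
/-!
`J` is convex as a supremum of affine functions, hence its perspective `γ J(s/γ, w/γ)` is jointly
convex in `(γ, s, w)` on `γ > 0`. Minimizing out `γ`, taking infima over balls of radius `δ` and
the supremum over `δ` all preserve convexity, and the last step makes `Υ` lower semicontinuous;
everything is nonnegative, which keeps the `EReal` arithmetic away from `⊥ + ⊤`. In both cases
`I w` is the infimum over a compact convex set of `β` (`[0, 1]`, resp. `{1}`) of a jointly convex,
lower semicontinuous, nonnegative function of `(β, w)` (using `ℓ ≥ 0`). Such an infimum is convex,
and lower semicontinuous by the tube lemma.
-/

open MeasureTheory ProbabilityTheory Filter RealInnerProductSpace Set Metric Topology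

lemma EReal.le_mul_add_mul_of_forall_gt {z u v : EReal} {a b : ℝ} (ha : 0 < a) (hb : 0 < b)
    (hu : 0 ≤ u) (hv : 0 ≤ v) (h : ∀ r t : ℝ, u < r → v < t → z ≤ a * r + b * t) :
    z ≤ a * u + b * v := by
  obtain rfl | hu_top := eq_or_ne u ⊤
  · rw [EReal.coe_mul_top_of_pos ha, EReal.top_add_of_ne_bot
      (ne_bot_of_le_ne_bot (by simp) (mul_nonneg (EReal.coe_nonneg.2 hb.le) hv))]
    exact le_top
  obtain rfl | hv_top := eq_or_ne v ⊤
  · rw [EReal.coe_mul_top_of_pos hb, EReal.add_top_of_ne_bot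
      (ne_bot_of_le_ne_bot (by simp) (mul_nonneg (EReal.coe_nonneg.2 ha.le) hu))]
    exact le_top
  lift u to ℝ using ⟨hu_top, ne_bot_of_le_ne_bot (by simp) hu⟩
  lift v to ℝ using ⟨hv_top, ne_bot_of_le_ne_bot (by simp) hv⟩
  refine EReal.le_of_forall_lt_iff_le.1 fun c hc => ?_
  norm_cast at hc
  set ε := (c - (a * u + b * v)) / (a + b)
  have hε : 0 < ε := _root_.div_pos (by linarith) (by linarith)
  have hcomb : a * (u + ε) + b * (v + ε) = c := by
    simp only [ε]; field_simp; ring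
  have := h (u + ε) (v + ε) (by exact_mod_cast lt_add_of_pos_right u hε)
    (by exact_mod_cast lt_add_of_pos_right v hε)
  rw [← hcomb]
  exact_mod_cast this

section Convexity

variable {E : Type*} [AddCommGroup E] [Module ℝ E]

/-- Mathlib's `ConvexOn` needs an ordered `ℝ`-module as codomain, which `EReal` is not. -/
def ERealConvexOn (s : Set E) (f : E → EReal) : Prop :=
  ∀ ⦃x⦄, x ∈ s → ∀ ⦃y⦄, y ∈ s → ∀ ⦃a b : ℝ⦄, 0 ≤ a → 0 ≤ b → a + b = 1 →
    f (a • x + b • y) ≤ a * f x + b * f y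

namespace ERealConvexOn

variable {s t : Set E} {f : E → EReal}

lemma of_pos (h : ∀ ⦃x⦄, x ∈ s → ∀ ⦃y⦄, y ∈ s → ∀ ⦃a b : ℝ⦄, 0 < a → 0 < b → a + b = 1 →
      f (a • x + b • y) ≤ a * f x + b * f y) : ERealConvexOn s f := by
  intro x hx y hy a b ha hb hab
  rcases ha.eq_or_lt with rfl | ha
  · obtain rfl : b = 1 := by linarith
    simp
  rcases hb.eq_or_lt with rfl | hb
  · obtain rfl : a = 1 := by linarith
    simp
  exact h hx hy ha hb hab

lemma mono (hf : ERealConvexOn s f) (hts : t ⊆ s) : ERealConvexOn t f :=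
  fun _ hx _ hy => hf (hts hx) (hts hy)

lemma const (s : Set E) (c : EReal) : ERealConvexOn s fun _ => c := by
  intro x _ y _ a b ha hb hab
  rw [← EReal.right_distrib_of_nonneg (EReal.coe_nonneg.2 ha) (EReal.coe_nonneg.2 hb),
    ← EReal.coe_add, hab, EReal.coe_one, one_mul]

lemma add_coe (hf : ERealConvexOn s f) {φ : E → ℝ}
    (hφ : ∀ x y (a b : ℝ), a + b = 1 → φ (a • x + b • y) = a * φ x + b * φ y) :
    ERealConvexOn s fun x => f x + φ x := by
  intro x hx y hy a b ha hb hab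
  have distrib : ∀ {c : ℝ}, 0 ≤ c → ∀ u v : EReal, (c : EReal) * (u + v) = c * u + c * v :=
    fun hc => EReal.left_distrib_of_nonneg_of_ne_top (EReal.coe_nonneg.2 hc) (EReal.coe_ne_top _)
  calc f (a • x + b • y) + φ (a • x + b • y)
      ≤ (a * f x + b * f y) + ((a * φ x + b * φ y : ℝ) : EReal) := by
        rw [hφ x y a b hab]
        exact add_le_add_left (hf hx hy ha hb hab) _
    _ = a * (f x + φ x) + b * (f y + φ y) := by
        rw [distrib ha, distrib hb, EReal.coe_add, EReal.coe_mul, EReal.coe_mul,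
          add_add_add_comm]

protected lemma iSup {ι : Sort*} {f : ι → E → EReal} (hf : ∀ i, ERealConvexOn s (f i)) :
    ERealConvexOn s fun x => ⨆ i, f i x := by
  intro x hx y hy a b ha hb hab
  refine iSup_le fun i => (hf i hx hy ha hb hab).trans ?_
  gcongr <;> exact le_iSup (fun i => f i _) i

lemma iSup_coe_sub {ι : Sort*} {φ : ι → E → ℝ}
    (hφ : ∀ i x y (a b : ℝ), a + b = 1 → φ i (a • x + b • y) = a * φ i x + b * φ i y)
    (c : ι → EReal) : ERealConvexOn s fun x => ⨆ i, (φ i x : EReal) - c i :=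
  .iSup fun i => by
    simpa only [sub_eq_add_neg, add_comm] using (const s (-c i)).add_coe (hφ i)

lemma biInf_fst {F : Type*} [AddCommGroup F] [Module ℝ F] {s : Set F} (hs : Convex ℝ s)
    {f : F × E → EReal} (hf : ERealConvexOn (s ×ˢ univ) f) (hf₀ : ∀ x ∈ s, ∀ y, 0 ≤ f (x, y)) :
    ERealConvexOn univ fun y => ⨅ x ∈ s, f (x, y) := by
  refine of_pos fun y₁ _ y₂ _ a b ha hb hab => ?_
  have h₀ : ∀ y, 0 ≤ ⨅ x ∈ s, f (x, y) := fun y => le_iInf₂ fun x hx => hf₀ x hx y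
  refine EReal.le_mul_add_mul_of_forall_gt ha hb (h₀ _) (h₀ _) fun r t hr ht => ?_
  obtain ⟨x₁, hx₁, hr⟩ : ∃ x ∈ s, f (x, y₁) < r := by
    simpa only [iInf_lt_iff, exists_prop] using hr
  obtain ⟨x₂, hx₂, ht⟩ : ∃ x ∈ s, f (x, y₂) < t := by
    simpa only [iInf_lt_iff, exists_prop] using ht
  calc ⨅ x ∈ s, f (x, a • y₁ + b • y₂)
      ≤ f (a • (x₁, y₁) + b • (x₂, y₂)) := iInf₂_le _ (hs hx₁ hx₂ ha.le hb.le hab)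
    _ ≤ a * f (x₁, y₁) + b * f (x₂, y₂) := hf ⟨hx₁, trivial⟩ ⟨hx₂, trivial⟩ ha.le hb.le hab
    _ ≤ a * r + b * t := by gcongr

lemma perspective (hf : ERealConvexOn univ f) :
    ERealConvexOn (Ioi 0 ×ˢ univ) fun p : ℝ × E => (p.1 : EReal) * f (p.1⁻¹ • p.2) := by
  refine of_pos ?_
  rintro ⟨γ₁, x₁⟩ ⟨hγ₁ : 0 < γ₁, -⟩ ⟨γ₂, x₂⟩ ⟨hγ₂ : 0 < γ₂, -⟩ a b ha hb hab
  simp only [Prod.smul_mk, Prod.mk_add_mk, smul_eq_mul]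
  set γ := a * γ₁ + b * γ₂
  have hγ : 0 < γ := by positivity
  have hcomb : γ⁻¹ • (a • x₁ + b • x₂) =
      (a * γ₁ / γ) • (γ₁⁻¹ • x₁) + (b * γ₂ / γ) • (γ₂⁻¹ • x₂) := by
    rw [smul_add, smul_smul, smul_smul, smul_smul, smul_smul]
    congr 2 <;> field_simp
  have hconv := hf (mem_univ (γ₁⁻¹ • x₁)) (mem_univ (γ₂⁻¹ • x₂))
    (by positivity : 0 ≤ a * γ₁ / γ) (by positivity : 0 ≤ b * γ₂ / γ)
    (by rw [← add_div, div_self hγ.ne'])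
  calc (γ : EReal) * f (γ⁻¹ • (a • x₁ + b • x₂))
      ≤ γ * ((a * γ₁ / γ : ℝ) * f (γ₁⁻¹ • x₁) + (b * γ₂ / γ : ℝ) * f (γ₂⁻¹ • x₂)) := by
        rw [hcomb]
        exact mul_le_mul_of_nonneg_left hconv (EReal.coe_nonneg.2 hγ.le)
    _ = a * (γ₁ * f (γ₁⁻¹ • x₁)) + b * (γ₂ * f (γ₂⁻¹ • x₂)) := by
        rw [EReal.left_distrib_of_nonneg_of_ne_top (EReal.coe_nonneg.2 hγ.le) (EReal.coe_ne_top _),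
          ← mul_assoc, ← mul_assoc, ← mul_assoc, ← mul_assoc, ← EReal.coe_mul, ← EReal.coe_mul,
          ← EReal.coe_mul, ← EReal.coe_mul]
        congr 3 <;> field_simp

end ERealConvexOn

end Convexity

section Cramer

variable {Ω E : Type*} [MeasurableSpace Ω] [NormedAddCommGroup E] [InnerProductSpace ℝ E]

noncomputable def cramerRate (P : Measure Ω) (S : Ω → ℝ) (X : Ω → E) (q : ℝ × E) : EReal :=
  ⨆ p : ℝ × E, (((q.1 * p.1 + ⟪q.2, p.2⟫ : ℝ) : EReal) -
    ENNReal.log (∫⁻ ω, ENNReal.ofReal (Real.exp (p.1 * S ω + ⟪p.2, X ω⟫)) ∂P))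

lemma ERealConvexOn.cramerRate (P : Measure Ω) (S : Ω → ℝ) (X : Ω → E) :
    ERealConvexOn univ (cramerRate P S X) :=
  .iSup_coe_sub (fun p q₁ q₂ a b _ => by
    simp only [Prod.fst_add, Prod.snd_add, Prod.smul_fst, Prod.smul_snd, smul_eq_mul,
      inner_add_left, real_inner_smul_left]
    ring) _

lemma cramerRate_nonneg (P : Measure Ω) [IsProbabilityMeasure P] (S : Ω → ℝ) (X : Ω → E) :
    0 ≤ cramerRate P S X :=
  fun _ => le_iSup_of_le 0 (by simp)

end Cramer

section Homogenization

variable {E : Type*} [AddCommGroup E] [Module ℝ E] {f : E → EReal}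

noncomputable def posHomogenization (f : E → EReal) (x : E) : EReal :=
  ⨅ γ ∈ Ioi (0 : ℝ), (γ : EReal) * f (γ⁻¹ • x)

lemma posHomogenization_nonneg (hf₀ : 0 ≤ f) : 0 ≤ posHomogenization f :=
  fun _ => le_iInf₂ fun _ hγ => mul_nonneg (EReal.coe_nonneg.2 (le_of_lt hγ)) (hf₀ _)

lemma ERealConvexOn.posHomogenization (hf : ERealConvexOn univ f) (hf₀ : 0 ≤ f) :
    ERealConvexOn univ (posHomogenization f) :=
  hf.perspective.biInf_fst (convex_Ioi 0)
    fun _ hγ _ => mul_nonneg (EReal.coe_nonneg.2 (le_of_lt hγ)) (hf₀ _)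

end Homogenization

section Regularization

noncomputable def lscRegularization {X α : Type*} [PseudoMetricSpace X] [CompleteLattice α]
    (f : X → α) (x : X) : α :=
  ⨆ (δ : ℝ) (_ : 0 < δ), ⨅ y ∈ ball x δ, f y

variable {X α : Type*} [PseudoMetricSpace X] [CompleteLinearOrder α]

lemma lowerSemicontinuous_lscRegularization (f : X → α) :
    LowerSemicontinuous (lscRegularization f) := by
  intro x c hc
  obtain ⟨δ, hδ, hcδ⟩ : ∃ δ > 0, c < ⨅ y ∈ ball x δ, f y := by
    simpa only [lscRegularization, lt_iSup_iff, exists_prop] using hc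
  filter_upwards [ball_mem_nhds x (half_pos hδ)] with x' hx'
  refine hcδ.trans_le (le_iSup₂_of_le (δ / 2) (half_pos hδ) (biInf_mono fun y hy => ?_))
  exact ball_subset_ball' (by linarith [mem_ball.1 hx']) hy

lemma lscRegularization_nonneg {f : X → EReal} (hf₀ : 0 ≤ f) : 0 ≤ lscRegularization f :=
  fun _ => le_iSup₂_of_le 1 one_pos (le_iInf₂ fun y _ => hf₀ y)

lemma ERealConvexOn.lscRegularization {E : Type*} [SeminormedAddCommGroup E] [NormedSpace ℝ E]
    {f : E → EReal} (hf : ERealConvexOn univ f) (hf₀ : 0 ≤ f) :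
    ERealConvexOn univ (lscRegularization f) := by
  refine .iSup fun δ => .iSup fun _ => .of_pos fun x _ y _ a b ha hb hab => ?_
  refine EReal.le_mul_add_mul_of_forall_gt ha hb (le_iInf₂ fun _ _ => hf₀ _)
    (le_iInf₂ fun _ _ => hf₀ _) fun r t hr ht => ?_
  obtain ⟨x', hx', hr⟩ : ∃ x' ∈ ball x δ, f x' < r := by
    simpa only [iInf_lt_iff, exists_prop] using hr
  obtain ⟨y', hy', ht⟩ : ∃ y' ∈ ball y δ, f y' < t := by
    simpa only [iInf_lt_iff, exists_prop] using ht
  have hmem : a • x' + b • y' ∈ ball (a • x + b • y) δ := by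
    rw [mem_ball_iff_norm, ← mem_ball_zero_iff,
      show a • x' + b • y' - (a • x + b • y) = a • (x' - x) + b • (y' - y) by
        simp only [smul_sub]; abel]
    exact convex_ball 0 δ (mem_ball_zero_iff.2 (mem_ball_iff_norm.1 hx'))
      (mem_ball_zero_iff.2 (mem_ball_iff_norm.1 hy')) ha.le hb.le hab
  calc ⨅ z ∈ ball (a • x + b • y) δ, f z ≤ f (a • x' + b • y') := iInf₂_le _ hmem
    _ ≤ a * f x' + b * f y' := hf trivial trivial ha.le hb.le hab
    _ ≤ a * r + b * t := by gcongr

end Regularization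

lemma LowerSemicontinuous.biInf_of_isCompact {X Y α : Type*} [TopologicalSpace X]
    [TopologicalSpace Y] [CompleteLinearOrder α] [DenselyOrdered α] {K : Set X}
    (hK : IsCompact K) {f : X × Y → α} (hf : LowerSemicontinuous f) :
    LowerSemicontinuous fun y => ⨅ x ∈ K, f (x, y) := by
  intro y₀ c hc
  obtain ⟨c', hcc', hc'⟩ := exists_between hc
  have hnear : ∀ᶠ y in 𝓝 y₀, ∀ x ∈ K, c' < f (x, y) :=
    hK.eventually_forall_of_forall_eventually fun x hx =>
      (continuous_swap.tendsto (y₀, x)).eventually (hf (x, y₀) c' (hc'.trans_le (iInf₂_le x hx)))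
  filter_upwards [hnear] with y hy
  exact hcc'.trans_le (le_iInf₂ fun x hx => (hy x hx).le)

lemma EReal.lowerSemicontinuous_add_coe {X : Type*} [TopologicalSpace X] {f : X → EReal}
    (hf : LowerSemicontinuous f) {g : X → ℝ} (hg : Continuous g) :
    LowerSemicontinuous fun x => f x + g x :=
  hf.add' (continuous_coe_real_ereal.comp hg).lowerSemicontinuous
    fun _ => EReal.continuousAt_add (.inr (EReal.coe_ne_bot _)) (.inr (EReal.coe_ne_top _))

lemma nonneg_of_tendsto_neg_inv_mul_log {g : ℝ → ENNReal} (hg : ∀ s, g s ≤ 1) {ℓ : EReal}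
    (h : Tendsto (fun s : ℝ => ((-s⁻¹ : ℝ) : EReal) * ENNReal.log (g s)) atTop (𝓝 ℓ)) :
    0 ≤ ℓ := by
  refine ge_of_tendsto h ?_
  filter_upwards [eventually_ge_atTop 0] with s hs
  rw [EReal.coe_neg, neg_mul, ← mul_neg]
  exact mul_nonneg (EReal.coe_nonneg.2 (inv_nonneg.2 hs))
    (EReal.neg_nonneg.2 (ENNReal.log_le_zero_iff.2 (hg s)))

theorem rate_function_lsc_convex_general
    {Ω : Type*} [MeasurableSpace Ω] (P : Measure Ω) [IsProbabilityMeasure P]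
    (d : ℕ)
    (S : ℕ → Ω → ℝ) (X : ℕ → Ω → EuclideanSpace ℝ (Fin d))
    -- ℓ := lim_{s → ∞} -(1/s) ln P[S 1 > s] exists in [0, ∞]
    (ℓ : EReal)
    (hℓ : Tendsto (fun s : ℝ => ((-s⁻¹ : ℝ) : EReal) * ENNReal.log (P {ω | s < S 0 ω}))
      atTop (nhds ℓ))
    -- the joint Cramér rate function J of waiting times and rewards
    (J : ℝ → EuclideanSpace ℝ (Fin d) → EReal)
    (hJ : ∀ s w, J s w = ⨆ p : ℝ × EuclideanSpace ℝ (Fin d),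
      (((s * p.1 + ⟪w, p.2⟫ : ℝ) : EReal) -
        ENNReal.log (∫⁻ ω, ENNReal.ofReal (Real.exp (p.1 * S 0 ω + ⟪p.2, X 0 ω⟫)) ∂P)))
    -- Υ: the lower-semicontinuous regularization of inf_{γ>0} γ J(·/γ, ·/γ),
    -- i.e. the monotone limit as δ ↓ 0 of local infima
    (Υ : ℝ → EuclideanSpace ℝ (Fin d) → EReal)
    (hΥ : ∀ β w, Υ β w = ⨆ (δ : ℝ) (_ : 0 < δ),
      ⨅ (s : ℝ) (_ : s ∈ Set.Ioo (β - δ) (β + δ)),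
        ⨅ (v : EuclideanSpace ℝ (Fin d)) (_ : v ∈ Metric.ball w δ),
          ⨅ (γ : ℝ) (_ : 0 < γ), (γ : EReal) * J (s / γ) (γ⁻¹ • v))
    -- the rate function I
    (I : EuclideanSpace ℝ (Fin d) → EReal)
    (hI : ℓ ≠ ⊤ → ∀ w, I w =
      ⨅ (β : ℝ) (_ : β ∈ Set.Icc (0 : ℝ) 1), Υ β w + ((1 - β : ℝ) : EReal) * ℓ)
    (hI' : ℓ = ⊤ → ∀ w, I w = Υ 1 w) :
    -- conclusion: I is lower semicontinuous and convex
    LowerSemicontinuous I ∧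
      ∀ x y : EuclideanSpace ℝ (Fin d), ∀ a b : ℝ, 0 ≤ a → 0 ≤ b → a + b = 1 →
        I (a • x + b • y) ≤ ((a : ℝ) : EReal) * I x + ((b : ℝ) : EReal) * I y := by
  set Φ := lscRegularization (posHomogenization (cramerRate P (S 0) (X 0)))
  have hΥΦ : ∀ β w, Υ β w = Φ (β, w) := fun β w => by
    simp only [hΥ, hJ, Φ, lscRegularization, posHomogenization, cramerRate, ← ball_prod_same,
      biInf_prod, Real.ball_eq_Ioo, Prod.smul_mk, smul_eq_mul, div_eq_inv_mul, mem_Ioi]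
  have hJ₀ := cramerRate_nonneg P (S 0) (X 0)
  have hΦconv : ERealConvexOn univ Φ :=
    ((ERealConvexOn.cramerRate P (S 0) (X 0)).posHomogenization hJ₀).lscRegularization
      (posHomogenization_nonneg hJ₀)
  have hΦ₀ : 0 ≤ Φ := lscRegularization_nonneg (posHomogenization_nonneg hJ₀)
  suffices ∃ K : Set ℝ, IsCompact K ∧ Convex ℝ K ∧
      ∃ F : ℝ × EuclideanSpace ℝ (Fin d) → EReal, LowerSemicontinuous F ∧
        ERealConvexOn univ F ∧ (∀ β ∈ K, ∀ w, 0 ≤ F (β, w)) ∧ ∀ w, I w = ⨅ β ∈ K, F (β, w) by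
    obtain ⟨K, hK, hKconv, F, hFlsc, hFconv, hF₀, hIF⟩ := this
    rw [funext hIF]
    exact ⟨hFlsc.biInf_of_isCompact hK, fun x y a b ha hb hab =>
      (hFconv.mono (subset_univ _)).biInf_fst hKconv hF₀ trivial trivial ha hb hab⟩
  by_cases hℓ_top : ℓ = ⊤
  · refine ⟨{1}, isCompact_singleton, convex_singleton 1, Φ,
      lowerSemicontinuous_lscRegularization _, hΦconv, fun _ _ _ => hΦ₀ _, fun w => ?_⟩
    simp [hI' hℓ_top, hΥΦ]
  have hℓ₀ : 0 ≤ ℓ := nonneg_of_tendsto_neg_inv_mul_log (fun _ => prob_le_one) hℓ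
  lift ℓ to ℝ using ⟨hℓ_top, ne_bot_of_le_ne_bot (by simp) hℓ₀⟩
  refine ⟨Icc 0 1, isCompact_Icc, convex_Icc 0 1, fun p => Φ p + ((1 - p.1) * ℓ : ℝ),
    EReal.lowerSemicontinuous_add_coe (lowerSemicontinuous_lscRegularization _) (by fun_prop),
    hΦconv.add_coe fun _ _ a b hab => ?_, fun β hβ w => ?_, fun w => ?_⟩
  · simp only [Prod.fst_add, Prod.smul_fst, smul_eq_mul]
    linear_combination (-ℓ) * hab
  · exact add_nonneg (hΦ₀ _)
      (EReal.coe_nonneg.2 (mul_nonneg (sub_nonneg.2 hβ.2) (EReal.coe_nonneg.1 hℓ₀)))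
  · simp only [hI hℓ_top, hΥΦ, EReal.coe_mul]

/-- The rate function `I` built from the lower-semicontinuous regularization `Υ` of
`inf_{γ>0} γ J(·/γ, ·/γ)`, where `J` is the joint Cramér rate function of waiting times and
rewards, is lower semicontinuous and convex. -/
theorem rate_function_lsc_convex
    {Ω : Type*} [MeasurableSpace Ω] (P : Measure Ω) [IsProbabilityMeasure P]
    (d : ℕ) (hd : 1 ≤ d)
    (S : ℕ → Ω → ℝ) (X : ℕ → Ω → EuclideanSpace ℝ (Fin d))
    -- waiting times are nonnegative
    (hSnn : ∀ n ω, 0 ≤ S n ω)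
    -- the pairs (S n, X n) are independent and identically distributed
    (hindep : iIndepFun (fun n ω => (S n ω, X n ω)) P)
    (hident : ∀ n, IdentDistrib (fun ω => (S n ω, X n ω)) (fun ω => (S 0 ω, X 0 ω)) P P)
    (hS0 : P {ω | S 0 ω = 0} < 1)
    -- ℓ := lim_{s → ∞} -(1/s) ln P[S 1 > s] exists in [0, ∞]
    (ℓ : EReal)
    (hℓ : Tendsto (fun s : ℝ => ((-s⁻¹ : ℝ) : EReal) * ENNReal.log (P {ω | s < S 0 ω}))
      atTop (nhds ℓ))
    -- the joint Cramér rate function J of waiting times and rewards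
    (J : ℝ → EuclideanSpace ℝ (Fin d) → EReal)
    (hJ : ∀ s w, J s w = ⨆ p : ℝ × EuclideanSpace ℝ (Fin d),
      (((s * p.1 + ⟪w, p.2⟫ : ℝ) : EReal) -
        ENNReal.log (∫⁻ ω, ENNReal.ofReal (Real.exp (p.1 * S 0 ω + ⟪p.2, X 0 ω⟫)) ∂P)))
    -- Υ: the lower-semicontinuous regularization of inf_{γ>0} γ J(·/γ, ·/γ),
    -- i.e. the monotone limit as δ ↓ 0 of local infima
    (Υ : ℝ → EuclideanSpace ℝ (Fin d) → EReal)
    (hΥ : ∀ β w, Υ β w = ⨆ (δ : ℝ) (_ : 0 < δ),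
      ⨅ (s : ℝ) (_ : s ∈ Set.Ioo (β - δ) (β + δ)),
        ⨅ (v : EuclideanSpace ℝ (Fin d)) (_ : v ∈ Metric.ball w δ),
          ⨅ (γ : ℝ) (_ : 0 < γ), (γ : EReal) * J (s / γ) (γ⁻¹ • v))
    -- the rate function I
    (I : EuclideanSpace ℝ (Fin d) → EReal)
    (hI : ℓ ≠ ⊤ → ∀ w, I w =
      ⨅ (β : ℝ) (_ : β ∈ Set.Icc (0 : ℝ) 1), Υ β w + ((1 - β : ℝ) : EReal) * ℓ)
    (hI' : ℓ = ⊤ → ∀ w, I w = Υ 1 w) :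
    -- conclusion: I is lower semicontinuous and convex
    LowerSemicontinuous I ∧
      ∀ x y : EuclideanSpace ℝ (Fin d), ∀ a b : ℝ, 0 ≤ a → 0 ≤ b → a + b = 1 →
        I (a • x + b • y) ≤ ((a : ℝ) : EReal) * I x + ((b : ℝ) : EReal) * I y :=
  rate_function_lsc_convex_general P d S X ℓ hℓ J hJ Υ hΥ I hI hI'
end

section
/- The function φ defined on ℝ^d by φ(k) := sup{ζ ∈ ℝ : E[e^{ζ S_1 + k·X_1}] ≤ 1} (where the supremum of the empty set is −∞) is upper semicontinuous and concave. -/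
open MeasureTheory Filter RealInnerProductSpace Set ENNReal Topology

/-! The set `C = {(ζ, k) : E[exp(ζ S₁ + ⟪k, X₁⟫)] ≤ 1}` is convex by Hölder's inequality; for
fixed `ζ` the set of admissible `k` is closed by Fatou's lemma, and since `S₁ ≥ 0` the set of
admissible `ζ` for fixed `k` is a down-set of `ℝ`. For any such `C`, the supremum of its fibre over
`k` is upper semicontinuous and concave in `k`. -/

section SupOfFibres

variable {E : Type*} {F : E → Set ℝ}

theorem upperSemicontinuous_sSup_coe_image [TopologicalSpace E] (hF : ∀ k, IsLowerSet (F k))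
    (hclosed : ∀ ζ, IsClosed {k | ζ ∈ F k}) :
    UpperSemicontinuous fun k => sSup (((↑) : ℝ → EReal) '' F k) := by
  intro k₀ y hy
  obtain ⟨ζ, hk₀ζ, hζy⟩ := EReal.exists_between_coe_real hy
  have hζ : ζ ∉ F k₀ := fun h => hk₀ζ.not_ge (le_sSup (mem_image_of_mem _ h))
  filter_upwards [(hclosed ζ).isOpen_compl.mem_nhds hζ] with k hk
  refine lt_of_le_of_lt (sSup_le ?_) hζy
  rintro _ ⟨s, hs, rfl⟩
  exact EReal.coe_le_coe_iff.2 (le_of_not_ge fun hζs => hk (hF k hζs hs))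

theorem exists_lt_coe_mul_of_lt_mul_sSup {A : Set ℝ} {a : ℝ} (ha : 0 < a) {u : EReal}
    (hu : u < a * sSup (((↑) : ℝ → EReal) '' A)) : ∃ s ∈ A, u < ((a * s : ℝ) : EReal) := by
  have hpos : (0 : EReal) < a := EReal.coe_pos.2 ha
  have hdiv : u / a < sSup (((↑) : ℝ → EReal) '' A) :=
    (EReal.div_lt_iff hpos (EReal.coe_ne_top a)).2 (by rwa [mul_comm])
  obtain ⟨_, ⟨s, hs, rfl⟩, hus⟩ := lt_sSup_iff.1 hdiv
  refine ⟨s, hs, ?_⟩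
  rw [EReal.coe_mul, mul_comm]
  exact (EReal.div_lt_iff hpos (EReal.coe_ne_top a)).1 hus

theorem sSup_coe_image_concave [AddCommMonoid E] [Module ℝ E]
    (hF : Convex ℝ {p : ℝ × E | p.1 ∈ F p.2}) {x y : E} {a b : ℝ} (ha : 0 ≤ a) (hb : 0 ≤ b)
    (hab : a + b = 1) :
    (a : EReal) * sSup (((↑) : ℝ → EReal) '' F x) + (b : EReal) * sSup ((↑) '' F y) ≤
      sSup ((↑) '' F (a • x + b • y)) := by
  rcases ha.eq_or_lt with rfl | ha
  · simp [show b = 1 by linarith]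
  rcases hb.eq_or_lt with rfl | hb
  · simp [show a = 1 by linarith]
  refine EReal.add_le_of_forall_lt fun u hu v hv => ?_
  obtain ⟨s, hs, hus⟩ := exists_lt_coe_mul_of_lt_mul_sSup ha hu
  obtain ⟨t, ht, hvt⟩ := exists_lt_coe_mul_of_lt_mul_sSup hb hv
  have hst : a * s + b * t ∈ F (a • x + b • y) :=
    hF (x := (s, x)) (y := (t, y)) hs ht ha.le hb.le hab
  calc u + v ≤ ((a * s + b * t : ℝ) : EReal) := by
        rw [EReal.coe_add]; exact add_le_add hus.le hvt.le
    _ ≤ _ := le_sSup (mem_image_of_mem _ hst)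

end SupOfFibres

theorem lowerSemicontinuous_lintegral {Ω E : Type*} [MeasurableSpace Ω] {μ : Measure Ω}
    [TopologicalSpace E] [FirstCountableTopology E] {f : E → Ω → ℝ≥0∞}
    (hmeas : ∀ k, AEMeasurable (f k) μ) (hf : ∀ ω, LowerSemicontinuous (f · ω)) :
    LowerSemicontinuous fun k => ∫⁻ ω, f k ω ∂μ := by
  refine fun k₀ => lowerSemicontinuousAt_iff_le_liminf.2 ?_
  calc ∫⁻ ω, f k₀ ω ∂μ ≤ ∫⁻ ω, liminf (f · ω) (𝓝 k₀) ∂μ :=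
        lintegral_mono fun ω => LowerSemicontinuousAt.le_liminf (hf ω k₀)
    _ ≤ _ := lintegral_liminf_le' hmeas

section ExpMoment

variable {Ω E : Type*} [MeasurableSpace Ω] [NormedAddCommGroup E] [InnerProductSpace ℝ E]
  (P : Measure Ω) (S : Ω → ℝ) (X : Ω → E)

noncomputable def expMoment (ζ : ℝ) (k : E) : ℝ≥0∞ :=
  ∫⁻ ω, ENNReal.ofReal (Real.exp (ζ * S ω + ⟪k, X ω⟫)) ∂P

variable {P S X}

theorem expMoment_mono_left (hS : 0 ≤ᵐ[P] S) (k : E) : Monotone fun ζ => expMoment P S X ζ k := by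
  intro ζ ζ' h
  refine lintegral_mono_ae ?_
  filter_upwards [hS] with ω hω
  gcongr

theorem lowerSemicontinuous_expMoment [MeasurableSpace E] [OpensMeasurableSpace E]
    (hS : AEMeasurable S P) (hX : AEMeasurable X P) (ζ : ℝ) :
    LowerSemicontinuous (expMoment P S X ζ) :=
  lowerSemicontinuous_lintegral (fun k => by fun_prop)
    fun ω => (ENNReal.continuous_ofReal.comp (by fun_prop)).lowerSemicontinuous

theorem expMoment_convexComb_le [MeasurableSpace E] [OpensMeasurableSpace E]
    (hS : AEMeasurable S P) (hX : AEMeasurable X P) {a b : ℝ}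
    (ha : 0 ≤ a) (hb : 0 ≤ b) (hab : a + b = 1) (ζ₁ ζ₂ : ℝ) (x y : E) :
    expMoment P S X (a * ζ₁ + b * ζ₂) (a • x + b • y) ≤
      expMoment P S X ζ₁ x ^ a * expMoment P S X ζ₂ y ^ b := by
  have hsplit : ∀ ω, ENNReal.ofReal (Real.exp ((a * ζ₁ + b * ζ₂) * S ω + ⟪a • x + b • y, X ω⟫)) =
      ENNReal.ofReal (Real.exp (ζ₁ * S ω + ⟪x, X ω⟫)) ^ a *
        ENNReal.ofReal (Real.exp (ζ₂ * S ω + ⟪y, X ω⟫)) ^ b := by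
    intro ω
    rw [ENNReal.ofReal_rpow_of_pos (Real.exp_pos _), ENNReal.ofReal_rpow_of_pos (Real.exp_pos _),
      ← Real.exp_mul, ← Real.exp_mul, ← ENNReal.ofReal_mul (Real.exp_pos _).le, ← Real.exp_add,
      inner_add_left, real_inner_smul_left, real_inner_smul_left]
    ring_nf
  calc expMoment P S X (a * ζ₁ + b * ζ₂) (a • x + b • y) = ∫⁻ ω,
        ENNReal.ofReal (Real.exp (ζ₁ * S ω + ⟪x, X ω⟫)) ^ a *
          ENNReal.ofReal (Real.exp (ζ₂ * S ω + ⟪y, X ω⟫)) ^ b ∂P := lintegral_congr hsplit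
    _ ≤ _ := ENNReal.lintegral_mul_norm_pow_le (by fun_prop) (by fun_prop) ha hb hab

theorem isLowerSet_setOf_expMoment_le_one (hS : 0 ≤ᵐ[P] S) (k : E) :
    IsLowerSet {ζ | expMoment P S X ζ k ≤ 1} :=
  fun _ _ hle h => (expMoment_mono_left hS k hle).trans h

theorem isClosed_setOf_expMoment_le_one [MeasurableSpace E] [OpensMeasurableSpace E]
    (hS : AEMeasurable S P) (hX : AEMeasurable X P) (ζ : ℝ) :
    IsClosed {k | expMoment P S X ζ k ≤ 1} :=
  (lowerSemicontinuous_expMoment hS hX ζ).isClosed_preimage 1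

theorem convex_setOf_expMoment_le_one [MeasurableSpace E] [OpensMeasurableSpace E]
    (hS : AEMeasurable S P) (hX : AEMeasurable X P) :
    Convex ℝ {p : ℝ × E | expMoment P S X p.1 p.2 ≤ 1} := by
  rintro ⟨ζ₁, x⟩ h₁ ⟨ζ₂, y⟩ h₂ a b ha hb hab
  calc expMoment P S X (a * ζ₁ + b * ζ₂) (a • x + b • y)
      ≤ expMoment P S X ζ₁ x ^ a * expMoment P S X ζ₂ y ^ b :=
        expMoment_convexComb_le hS hX ha hb hab ζ₁ ζ₂ x y
    _ ≤ 1 * 1 := mul_le_mul' (rpow_le_one h₁ ha) (rpow_le_one h₂ hb)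
    _ = 1 := one_mul 1

end ExpMoment

theorem phi_upperSemicontinuous_concave_general
    {Ω : Type*} [MeasurableSpace Ω] (P : Measure Ω)
    (d : ℕ)
    (S₁ : Ω → ℝ) (X₁ : Ω → EuclideanSpace ℝ (Fin d))
    -- the waiting time is nonnegative and not concentrated at zero
    (hSnn : ∀ ω, 0 ≤ S₁ ω)
    (hSmeas : Measurable S₁) (hXmeas : Measurable X₁)
    -- φ(k) := sup {ζ ∈ ℝ : E[exp(ζ S₁ + k ⬝ X₁)] ≤ 1}, the sup of the empty set being ⊥
    (φ : EuclideanSpace ℝ (Fin d) → EReal)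
    (hφ : ∀ k, φ k = sSup ((fun ζ : ℝ => (ζ : EReal)) ''
      {ζ : ℝ | ∫⁻ ω, ENNReal.ofReal (Real.exp (ζ * S₁ ω + ⟪k, X₁ ω⟫)) ∂P ≤ 1})) :
    -- conclusion: φ is upper semicontinuous and concave
    UpperSemicontinuous φ ∧
      ∀ x y : EuclideanSpace ℝ (Fin d), ∀ a b : ℝ, 0 ≤ a → 0 ≤ b → a + b = 1 →
        ((a : ℝ) : EReal) * φ x + ((b : ℝ) : EReal) * φ y ≤ φ (a • x + b • y) := by
  obtain rfl : φ = fun k => sSup (((↑) : ℝ → EReal) '' {ζ | expMoment P S₁ X₁ ζ k ≤ 1}) :=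
    funext hφ
  refine ⟨upperSemicontinuous_sSup_coe_image
    (isLowerSet_setOf_expMoment_le_one (ae_of_all _ hSnn))
    (isClosed_setOf_expMoment_le_one hSmeas.aemeasurable hXmeas.aemeasurable), ?_⟩
  intro x y a b ha hb hab
  exact sSup_coe_image_concave (F := fun k => {ζ | expMoment P S₁ X₁ ζ k ≤ 1})
    (convex_setOf_expMoment_le_one hSmeas.aemeasurable hXmeas.aemeasurable) ha hb hab

/-- The function `φ(k) := sup {ζ : E[exp(ζ S 1 + k ⬝ X 1)] ≤ 1}` (with `sup ∅ = -∞`)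
is upper semicontinuous and concave. -/
theorem phi_upperSemicontinuous_concave
    {Ω : Type*} [MeasurableSpace Ω] (P : Measure Ω) [IsProbabilityMeasure P]
    (d : ℕ) (hd : 1 ≤ d)
    (S₁ : Ω → ℝ) (X₁ : Ω → EuclideanSpace ℝ (Fin d))
    -- the waiting time is nonnegative and not concentrated at zero
    (hSnn : ∀ ω, 0 ≤ S₁ ω)
    (hSmeas : Measurable S₁) (hXmeas : Measurable X₁)
    (hS0 : P {ω | S₁ ω = 0} < 1)
    -- φ(k) := sup {ζ ∈ ℝ : E[exp(ζ S₁ + k ⬝ X₁)] ≤ 1}, the sup of the empty set being ⊥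
    (φ : EuclideanSpace ℝ (Fin d) → EReal)
    (hφ : ∀ k, φ k = sSup ((fun ζ : ℝ => (ζ : EReal)) ''
      {ζ : ℝ | ∫⁻ ω, ENNReal.ofReal (Real.exp (ζ * S₁ ω + ⟪k, X₁ ω⟫)) ∂P ≤ 1})) :
    -- conclusion: φ is upper semicontinuous and concave
    UpperSemicontinuous φ ∧
      ∀ x y : EuclideanSpace ℝ (Fin d), ∀ a b : ℝ, 0 ≤ a → 0 ≤ b → a + b = 1 →
        ((a : ℝ) : EReal) * φ x + ((b : ℝ) : EReal) * φ y ≤ φ (a • x + b • y) :=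
  phi_upperSemicontinuous_concave_general P d S₁ X₁ hSnn hSmeas hXmeas φ hφ
end
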